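/- Let ρ > 0 and Γ with ρ/2 ≤ Γ ≤ ρ. For any coordinate i, the integral of x_i^2 over the budget set {x ∈ ℝ^n : ‖x‖_1 ≤ ρ, ‖x‖_∞ ≤ Γ} equals (2ρ^2/((n+1)(n+2))) · ((2ρ)^n − n(2(ρ−Γ))^n)/n! − ((2(ρ−Γ))^n/n!) · ((n^2+3n−2)Γ^2 + (4−2n)ρΓ)/((n+1)(n+2)). -/

import Mathlib

/-!
Slice the budget set along the hyperplanes `x i = t`: for `|t| ≤ Γ` the slice is the budget set
of one dimension less with `ℓ¹` radius `ρ - |t|`. Because that radius is at most `2Γ`, at most one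
coordinate of a point of the `ℓ¹`-ball of radius `s ≤ 2Γ` can exceed `Γ` in absolute value, so the
budget set is that ball with the disjoint caps `{Γ < |x k|}` removed, and each cap has the volume
of the `ℓ¹`-ball of radius `s - Γ`; this gives `budgetVolume`. The second moment is then the
one-variable integral `2 ∫₀^Γ t² budgetVolume (ρ - t) dt` of a piecewise polynomial.
-/

open MeasureTheory Set

section Slicing

variable {α : Type*} [MeasureSpace α] [SigmaFinite (volume : Measure α)] {m : ℕ}

theorem lintegral_eq_lintegral_insertNth (i : Fin (m + 1)) {F : (Fin (m + 1) → α) → ENNReal}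
    (hF : Measurable F) :
    ∫⁻ x, F x = ∫⁻ t, ∫⁻ y, F (i.insertNth t y) := by
  have e := (volume_preserving_piFinSuccAbove (fun _ : Fin (m + 1) => α) i).symm
  rw [← e.lintegral_comp hF, Measure.volume_eq_prod, lintegral_prod]
  · simp [MeasurableEquiv.piFinSuccAbove_symm_apply, Fin.insertNthEquiv]
  · exact (hF.comp e.measurable).aemeasurable

theorem setLIntegral_comp_eval (i : Fin (m + 1)) {S : Set (Fin (m + 1) → α)}
    (hS : MeasurableSet S) {φ : α → ENNReal} (hφ : Measurable φ) :
    ∫⁻ x in S, φ (x i) = ∫⁻ t, φ t * volume (i.insertNth t ⁻¹' S) := by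
  have hF : Measurable (S.indicator fun x => φ (x i)) :=
    (hφ.comp (measurable_pi_apply i)).indicator hS
  rw [← lintegral_indicator hS, lintegral_eq_lintegral_insertNth i hF]
  refine lintegral_congr fun t => ?_
  have hpre : MeasurableSet (i.insertNth t ⁻¹' S) := hS.preimage
    ((MeasurableEquiv.piFinSuccAbove (fun _ => α) i).symm.measurable.comp measurable_prodMk_left)
  rw [← lintegral_indicator_one hpre, ← lintegral_const_mul _ (measurable_one.indicator hpre)]
  refine lintegral_congr fun y => ?_
  by_cases hy : i.insertNth t y ∈ S <;> simp [indicator, hy]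

theorem volume_eq_lintegral_volume_insertNth (i : Fin (m + 1)) {S : Set (Fin (m + 1) → α)}
    (hS : MeasurableSet S) :
    volume S = ∫⁻ t, volume (i.insertNth t ⁻¹' S) := by
  simpa using setLIntegral_comp_eval i hS (φ := 1) measurable_const

end Slicing

theorem intervalIntegral_comp_abs {g : ℝ → ℝ} (hg : Continuous g) {a : ℝ} (ha : 0 ≤ a) :
    ∫ t in -a..a, g |t| = 2 * ∫ t in 0..a, g t := by
  have hpos : ∫ t in 0..a, g |t| = ∫ t in 0..a, g t :=
    intervalIntegral.integral_congr fun t ht => by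
      rw [uIcc_of_le ha] at ht
      rw [abs_of_nonneg ht.1]
  have hneg : ∫ t in -a..0, g |t| = ∫ t in 0..a, g |t| := by
    simpa using (intervalIntegral.integral_comp_neg (a := 0) (b := a) fun t => g |t|).symm
  have hint : ∀ b c : ℝ, IntervalIntegrable (fun t => g |t|) volume b c := fun _ _ =>
    (hg.comp continuous_abs).intervalIntegrable _ _
  rw [← intervalIntegral.integral_add_adjacent_intervals (hint _ 0) (hint 0 _), hneg, hpos,
    two_mul]

theorem setLIntegral_Icc_ofReal_comp_abs {g : ℝ → ℝ} (hg : Continuous g) {a : ℝ} (ha : 0 ≤ a)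
    (hg0 : ∀ t ∈ Icc 0 a, 0 ≤ g t) :
    ∫⁻ t in Icc (-a) a, ENNReal.ofReal (g |t|) = ENNReal.ofReal (2 * ∫ t in 0..a, g t) := by
  have hnonneg : 0 ≤ᵐ[volume.restrict (Icc (-a) a)] fun t => g |t| := by
    filter_upwards [ae_restrict_mem measurableSet_Icc] with t ht
    exact hg0 _ ⟨abs_nonneg t, abs_le.2 ht⟩
  have hint : IntegrableOn (fun t => g |t|) (Icc (-a) a) :=
    (hg.comp continuous_abs).integrableOn_Icc
  rw [← ofReal_integral_eq_lintegral_ofReal hint hnonneg,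
    integral_Icc_eq_integral_Ioc, ← intervalIntegral.integral_of_le (by linarith),
    intervalIntegral_comp_abs hg ha]

theorem integral_sub_pow (s a b : ℝ) (k : ℕ) :
    ∫ t in a..b, (s - t) ^ k = ((s - a) ^ (k + 1) - (s - b) ^ (k + 1)) / (k + 1) := by
  rw [intervalIntegral.integral_comp_sub_left (fun u => u ^ k) s, integral_pow]

theorem integral_sq_mul_sub_pow (c b : ℝ) (m : ℕ) :
    ∫ u in 0..b, u ^ 2 * (c - u) ^ m =
      c ^ 2 * ((c ^ (m + 1) - (c - b) ^ (m + 1)) / (m + 1))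
        - 2 * c * ((c ^ (m + 2) - (c - b) ^ (m + 2)) / (m + 2))
        + (c ^ (m + 3) - (c - b) ^ (m + 3)) / (m + 3) := by
  have hexpand : ∀ u : ℝ,
      u ^ 2 * (c - u) ^ m = c ^ 2 * (c - u) ^ m - 2 * c * (c - u) ^ (m + 1) + (c - u) ^ (m + 2) :=
    fun u => by ring
  simp_rw [hexpand]
  have hint : ∀ g : ℝ → ℝ, Continuous g → IntervalIntegrable g volume 0 b :=
    fun g hg => hg.intervalIntegrable _ _
  rw [intervalIntegral.integral_add (hint _ (by fun_prop)) (hint _ (by fun_prop)),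
    intervalIntegral.integral_sub (hint _ (by fun_prop)) (hint _ (by fun_prop)),
    intervalIntegral.integral_const_mul, intervalIntegral.integral_const_mul,
    integral_sub_pow, integral_sub_pow, integral_sub_pow, sub_zero]
  push_cast
  ring

theorem integral_mul_max_sub_pow {m : ℕ} (hm : m ≠ 0) {f : ℝ → ℝ} (hf : Continuous f)
    {c b : ℝ} (hc : 0 ≤ c) (hcb : c ≤ b) :
    ∫ u in 0..b, f u * (max (c - u) 0) ^ m = ∫ u in 0..c, f u * (c - u) ^ m := by
  have hint : ∀ a a' : ℝ, IntervalIntegrable (fun u => f u * (max (c - u) 0) ^ m) volume a a' :=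
    fun _ _ => Continuous.intervalIntegrable (by fun_prop) _ _
  rw [← intervalIntegral.integral_add_adjacent_intervals (hint 0 c) (hint c b)]
  have hleft : ∫ u in 0..c, f u * (max (c - u) 0) ^ m = ∫ u in 0..c, f u * (c - u) ^ m :=
    intervalIntegral.integral_congr fun u hu => by
      rw [uIcc_of_le hc] at hu
      rw [max_eq_left (by linarith [hu.2])]
  have hright : ∫ u in c..b, f u * (max (c - u) 0) ^ m = 0 := by
    refine (intervalIntegral.integral_congr fun u hu => ?_).trans intervalIntegral.integral_zero
    rw [uIcc_of_le hcb] at hu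
    rw [max_eq_right (by linarith [hu.1]), zero_pow hm, mul_zero]
  rw [hleft, hright, add_zero]

def l1Ball (m : ℕ) (s : ℝ) : Set (Fin m → ℝ) := {x | ∑ k, |x k| ≤ s}

theorem measurableSet_l1Ball (m : ℕ) (s : ℝ) : MeasurableSet (l1Ball m s) :=
  measurableSet_le (by fun_prop) measurable_const

theorem volume_l1Ball (m : ℕ) {s : ℝ} (hs : 0 ≤ s) :
    volume (l1Ball m s) = ENNReal.ofReal ((2 * s) ^ m / m.factorial) := by
  rcases m.eq_zero_or_pos with rfl | hm
  · simp [l1Ball, hs, volume_pi]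
  have : Nonempty (Fin m) := ⟨⟨0, hm⟩⟩
  have h := volume_sum_rpow_le (ι := Fin m) le_rfl s
  simp only [Real.rpow_one, div_one, one_add_one_eq_two, Real.Gamma_two, mul_one,
    Fintype.card_fin] at h
  rw [l1Ball, h, Real.Gamma_nat_eq_factorial, ← ENNReal.ofReal_pow hs,
    ← ENNReal.ofReal_mul (by positivity)]
  congr 1
  ring

theorem sum_abs_insertNth {m : ℕ} (i : Fin (m + 1)) (t : ℝ) (y : Fin m → ℝ) :
    ∑ j, |i.insertNth t y j| = |t| + ∑ j, |y j| := by
  simp [Fin.sum_univ_succAbove _ i]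

theorem preimage_insertNth_l1Ball {m : ℕ} (i : Fin (m + 1)) (t s : ℝ) :
    i.insertNth t ⁻¹' l1Ball (m + 1) s = l1Ball m (s - |t|) := by
  ext y
  simp only [l1Ball, mem_preimage, mem_ofPred_eq, sum_abs_insertNth]
  constructor <;> intro h <;> linarith

theorem preimage_insertNth_l1Ball_inter_abs_le {m : ℕ} (i : Fin (m + 1)) (t s a : ℝ) :
    i.insertNth t ⁻¹' (l1Ball (m + 1) s ∩ {x | |x i| ≤ a}) =
      if |t| ≤ a then l1Ball m (s - |t|) else ∅ := by
  split_ifs with ht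
  · ext y
    simp [preimage_insertNth_l1Ball, ht]
  · ext y
    simp [ht]

theorem volume_l1Ball_inter_abs_le {m : ℕ} (i : Fin (m + 1)) {s a : ℝ} (ha : 0 ≤ a)
    (has : a ≤ s) :
    volume (l1Ball (m + 1) s ∩ {x | |x i| ≤ a}) =
      ENNReal.ofReal (((2 * s) ^ (m + 1) - (2 * (s - a)) ^ (m + 1)) / (m + 1).factorial) := by
  have hS : MeasurableSet (l1Ball (m + 1) s ∩ {x | |x i| ≤ a}) :=
    (measurableSet_l1Ball _ _).inter (measurableSet_le (by fun_prop) measurable_const)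
  have hslice : ∀ t, volume (i.insertNth t ⁻¹' (l1Ball (m + 1) s ∩ {x | |x i| ≤ a})) =
      (Icc (-a) a).indicator (fun t => ENNReal.ofReal ((2 * (s - |t|)) ^ m / m.factorial)) t := by
    intro t
    rw [preimage_insertNth_l1Ball_inter_abs_le]
    by_cases ht : |t| ≤ a
    · rw [if_pos ht, indicator_of_mem (mem_Icc.2 (abs_le.1 ht)), volume_l1Ball m (by linarith)]
    · rw [if_neg ht, indicator_of_notMem (fun h => ht (abs_le.2 (mem_Icc.1 h))), measure_empty]
  rw [volume_eq_lintegral_volume_insertNth i hS, lintegral_congr hslice,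
    lintegral_indicator measurableSet_Icc,
    setLIntegral_Icc_ofReal_comp_abs (g := fun t => (2 * (s - t)) ^ m / m.factorial)
      (by fun_prop) ha fun t ht =>
        div_nonneg (pow_nonneg (by linarith [ht.2]) _) (Nat.cast_nonneg _)]
  congr 1
  simp only [div_eq_mul_inv _ (m.factorial : ℝ), mul_pow, intervalIntegral.integral_mul_const,
    intervalIntegral.integral_const_mul, integral_sub_pow, Nat.factorial_succ]
  push_cast
  field_simp
  ring

theorem volume_l1Ball_inter_lt_abs {m : ℕ} (i : Fin m) {s a : ℝ} (ha : 0 ≤ a) (has : a ≤ s) :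
    volume (l1Ball m s ∩ {x | a < |x i|}) =
      ENNReal.ofReal ((2 * (s - a)) ^ m / m.factorial) := by
  obtain ⟨m, rfl⟩ := Nat.exists_eq_add_one_of_ne_zero i.pos.ne'
  have hdiff : l1Ball (m + 1) s \ {x | |x i| ≤ a} = l1Ball (m + 1) s ∩ {x | a < |x i|} := by
    ext x
    simp [not_le]
  have hsplit := measure_inter_add_sdiff (μ := volume) (l1Ball (m + 1) s)
    (measurableSet_le (f := fun x : Fin (m + 1) → ℝ => |x i|) (g := fun _ => a) (by fun_prop)
      measurable_const)
  rw [hdiff, volume_l1Ball_inter_abs_le i ha has, volume_l1Ball _ (ha.trans has),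
    add_comm] at hsplit
  have hle : (2 * (s - a)) ^ (m + 1) ≤ (2 * s) ^ (m + 1) :=
    pow_le_pow_left₀ (by linarith) (by linarith) _
  rw [ENNReal.eq_sub_of_add_eq ENNReal.ofReal_ne_top hsplit,
    ← ENNReal.ofReal_sub _ (div_nonneg (sub_nonneg.2 hle) (Nat.cast_nonneg _))]
  congr 1
  ring

theorem pairwise_disjoint_l1Ball_inter_lt_abs {m : ℕ} {s Γ : ℝ} (h : s ≤ 2 * Γ) :
    Pairwise (Function.onFun Disjoint fun k : Fin m => l1Ball m s ∩ {x | Γ < |x k|}) := by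
  intro j k hjk
  refine disjoint_left.2 ?_
  rintro x ⟨hs, hj⟩ ⟨-, hk⟩
  have := Finset.add_le_sum (f := fun k => |x k|) (fun _ _ => abs_nonneg _)
    (Finset.mem_univ j) (Finset.mem_univ k) hjk
  simp only [l1Ball, mem_ofPred_eq] at hs hj hk
  linarith

def budgetSet (m : ℕ) (s Γ : ℝ) : Set (Fin m → ℝ) := {x | ∑ k, |x k| ≤ s ∧ ∀ k, |x k| ≤ Γ}

theorem measurableSet_budgetSet (m : ℕ) (s Γ : ℝ) : MeasurableSet (budgetSet m s Γ) :=
  (measurableSet_l1Ball m s).inter <| measurableSet_setOfPred.2 <| Measurable.forall fun k =>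
    measurableSet_setOfPred.1 <| measurableSet_le (by fun_prop) measurable_const

theorem preimage_insertNth_budgetSet {m : ℕ} (i : Fin (m + 1)) (t s Γ : ℝ) :
    i.insertNth t ⁻¹' budgetSet (m + 1) s Γ =
      if |t| ≤ Γ then budgetSet m (s - |t|) Γ else ∅ := by
  ext y
  simp only [budgetSet, mem_preimage, mem_ofPred_eq, sum_abs_insertNth, Fin.forall_iff_succAbove i,
    Fin.insertNth_apply_same, Fin.insertNth_apply_succAbove]
  split_ifs with ht
  · simp only [mem_ofPred_eq, ht, true_and]
    constructor <;> rintro ⟨h, h'⟩ <;> exact ⟨by linarith, h'⟩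
  · simp [ht]

theorem l1Ball_eq_budgetSet_union_iUnion {m : ℕ} {s Γ : ℝ} :
    l1Ball m s = budgetSet m s Γ ∪ ⋃ k, l1Ball m s ∩ {x | Γ < |x k|} := by
  ext x
  simp only [l1Ball, budgetSet, mem_union, mem_iUnion, mem_inter_iff, mem_ofPred_eq]
  by_cases h : ∀ k, |x k| ≤ Γ
  · simp [h]
  · push Not at h
    obtain ⟨k, hk⟩ := h
    exact ⟨fun hs => Or.inr ⟨k, hs, hk⟩, by rintro (⟨hs, -⟩ | ⟨-, hs, -⟩) <;> exact hs⟩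

noncomputable def budgetVolume (m : ℕ) (s Γ : ℝ) : ℝ :=
  ((2 * s) ^ m - m * (2 * max (s - Γ) 0) ^ m) / m.factorial

theorem budgetVolume_nonneg (m : ℕ) {s Γ : ℝ} (hs : 0 ≤ s) (h : s ≤ 2 * Γ) :
    0 ≤ budgetVolume m s Γ := by
  have hmax : 2 * max (s - Γ) 0 ≤ s := by
    rcases le_total (s - Γ) 0 with h' | h'
    · rw [max_eq_right h']; linarith
    · rw [max_eq_left h']; linarith
  refine div_nonneg (sub_nonneg.2 ?_) (Nat.cast_nonneg _)
  calc (m : ℝ) * (2 * max (s - Γ) 0) ^ m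
      ≤ 2 ^ m * (2 * max (s - Γ) 0) ^ m := by
        gcongr
        exact_mod_cast Nat.lt_two_pow_self.le
    _ = (2 * (2 * max (s - Γ) 0)) ^ m := (mul_pow _ _ _).symm
    _ ≤ (2 * s) ^ m := by gcongr

theorem budgetSet_eq_l1Ball {m : ℕ} {s Γ : ℝ} (h : s ≤ Γ) : budgetSet m s Γ = l1Ball m s := by
  refine subset_antisymm (fun x hx => hx.1) fun x hx => ⟨hx, fun k => ?_⟩
  exact (Finset.single_le_sum (f := fun k => |x k|) (fun _ _ => abs_nonneg _)
    (Finset.mem_univ k)).trans (hx.trans h)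

theorem volume_l1Ball_eq_volume_budgetSet_add {m : ℕ} {s Γ : ℝ} (h : s ≤ 2 * Γ) :
    volume (l1Ball m s) =
      volume (budgetSet m s Γ) + ∑ k, volume (l1Ball m s ∩ {x | Γ < |x k|}) := by
  have hE : ∀ k : Fin m, MeasurableSet (l1Ball m s ∩ {x | Γ < |x k|}) := fun k =>
    (measurableSet_l1Ball m s).inter (measurableSet_lt measurable_const (by fun_prop))
  have hdisj : Disjoint (budgetSet m s Γ) (⋃ k, l1Ball m s ∩ {x | Γ < |x k|}) := by
    refine disjoint_left.2 fun x hx hx' => ?_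
    obtain ⟨k, -, hk⟩ := mem_iUnion.1 hx'
    exact (hx.2 k).not_gt hk
  conv_lhs => rw [l1Ball_eq_budgetSet_union_iUnion (Γ := Γ)]
  rw [measure_union hdisj (MeasurableSet.iUnion hE),
    measure_iUnion (pairwise_disjoint_l1Ball_inter_lt_abs h) hE, tsum_fintype]

theorem volume_budgetSet (m : ℕ) {s Γ : ℝ} (hs : 0 ≤ s) (h : s ≤ 2 * Γ) :
    volume (budgetSet m s Γ) = ENNReal.ofReal (budgetVolume m s Γ) := by
  rcases le_total s Γ with hsΓ | hΓs
  · rw [budgetSet_eq_l1Ball hsΓ, volume_l1Ball m hs, budgetVolume,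
      max_eq_right (sub_nonpos.2 hsΓ)]
    rcases eq_or_ne m 0 with rfl | hm <;> simp [*]
  · have hsplit := volume_l1Ball_eq_volume_budgetSet_add (m := m) h
    simp only [volume_l1Ball m hs, volume_l1Ball_inter_lt_abs _ (by linarith : 0 ≤ Γ) hΓs,
      Finset.sum_const, Finset.card_univ, Fintype.card_fin, nsmul_eq_mul] at hsplit
    rw [← ENNReal.ofReal_natCast, ← ENNReal.ofReal_mul (Nat.cast_nonneg _)] at hsplit
    rw [ENNReal.eq_sub_of_add_eq ENNReal.ofReal_ne_top hsplit.symm,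
      ← ENNReal.ofReal_sub _ (by positivity), budgetVolume, max_eq_left (sub_nonneg.2 hΓs)]
    congr 1
    ring

theorem setIntegral_budgetSet_sq {m : ℕ} (i : Fin (m + 1)) {ρ Γ : ℝ} (hΓρ : Γ ≤ ρ)
    (hρΓ : ρ ≤ 2 * Γ) :
    ∫ x in budgetSet (m + 1) ρ Γ, (x i) ^ 2 =
      2 * ∫ t in 0..Γ, t ^ 2 * budgetVolume m (ρ - t) Γ := by
  have hΓ : 0 ≤ Γ := by linarith
  have hg0 : ∀ t ∈ Icc 0 Γ, 0 ≤ t ^ 2 * budgetVolume m (ρ - t) Γ := fun t ht =>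
    mul_nonneg (sq_nonneg t) (budgetVolume_nonneg m (by linarith [ht.2]) (by linarith [ht.1]))
  have hslice : ∀ t, ENNReal.ofReal (t ^ 2) * volume (i.insertNth t ⁻¹' budgetSet (m + 1) ρ Γ) =
      (Icc (-Γ) Γ).indicator
        (fun t => ENNReal.ofReal (|t| ^ 2 * budgetVolume m (ρ - |t|) Γ)) t := by
    intro t
    rw [preimage_insertNth_budgetSet]
    by_cases ht : |t| ≤ Γ
    · rw [if_pos ht, indicator_of_mem (mem_Icc.2 (abs_le.1 ht)),
        volume_budgetSet m (by linarith) (by linarith [abs_nonneg t]), sq_abs,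
        ENNReal.ofReal_mul (sq_nonneg t)]
    · rw [if_neg ht, indicator_of_notMem (fun h => ht (abs_le.2 (mem_Icc.1 h))), measure_empty,
        mul_zero]
  rw [integral_eq_lintegral_of_nonneg_ae (ae_of_all _ fun x => sq_nonneg _)
      ((continuous_apply i).pow 2).aestronglyMeasurable,
    setLIntegral_comp_eval i (φ := fun t => ENNReal.ofReal (t ^ 2))
      (measurableSet_budgetSet _ _ _) (by fun_prop),
    lintegral_congr hslice, lintegral_indicator measurableSet_Icc,
    setLIntegral_Icc_ofReal_comp_abs (g := fun t => t ^ 2 * budgetVolume m (ρ - t) Γ)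
      (by unfold budgetVolume; fun_prop) hΓ hg0,
    ENNReal.toReal_ofReal (mul_nonneg zero_le_two (intervalIntegral.integral_nonneg hΓ hg0))]

theorem two_mul_integral_sq_mul_budgetVolume (m : ℕ) {ρ Γ : ℝ} (hΓρ : Γ ≤ ρ)
    (hρΓ : ρ ≤ 2 * Γ) :
    2 * ∫ t in 0..Γ, t ^ 2 * budgetVolume m (ρ - t) Γ =
      (2 * ρ ^ 2 / ((↑(m + 1) + 1) * (↑(m + 1) + 2))) *
          (((2 * ρ) ^ (m + 1) - ↑(m + 1) * (2 * (ρ - Γ)) ^ (m + 1)) / (m + 1).factorial)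
        - ((2 * (ρ - Γ)) ^ (m + 1) / (m + 1).factorial) *
          (((↑(m + 1) ^ 2 + 3 * ↑(m + 1) - 2 : ℝ) * Γ ^ 2 + (4 - 2 * ↑(m + 1)) * ρ * Γ) /
            ((↑(m + 1) + 1) * (↑(m + 1) + 2))) := by
  have hpoint : ∀ t : ℝ, t ^ 2 * budgetVolume m (ρ - t) Γ =
      2 ^ m / m.factorial * (t ^ 2 * (ρ - t) ^ m
        - m * (t ^ 2 * (max (ρ - Γ - t) 0) ^ m)) := fun t => by
    rw [budgetVolume, sub_right_comm, mul_pow, mul_pow]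
    ring
  have htrunc : (m : ℝ) * ∫ t in 0..Γ, t ^ 2 * (max (ρ - Γ - t) 0) ^ m =
      m * ∫ t in 0..ρ - Γ, t ^ 2 * (ρ - Γ - t) ^ m := by
    rcases eq_or_ne m 0 with rfl | hm
    · simp
    · rw [integral_mul_max_sub_pow hm (by fun_prop) (by linarith) (by linarith)]
  simp_rw [hpoint]
  rw [intervalIntegral.integral_const_mul,
    intervalIntegral.integral_sub (Continuous.intervalIntegrable (by fun_prop) _ _)
      (Continuous.intervalIntegrable (by fun_prop) _ _),
    intervalIntegral.integral_const_mul, htrunc, integral_sq_mul_sub_pow,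
    integral_sq_mul_sub_pow, sub_self, zero_pow (by omega), zero_pow (by omega),
    zero_pow (by omega), Nat.factorial_succ]
  push_cast
  simp only [mul_pow, pow_succ]
  field_simp
  ring

theorem budget_set_second_moment_general (n : ℕ) (ρ Γ : ℝ)
    (hΓ1 : ρ / 2 ≤ Γ) (hΓ2 : Γ ≤ ρ) (i : Fin n) :
    ∫ x in {x : Fin n → ℝ | ∑ k, |x k| ≤ ρ ∧ ∀ k, |x k| ≤ Γ}, (x i) ^ 2 =
      (2 * ρ ^ 2 / ((n + 1) * (n + 2))) * (((2 * ρ) ^ n - n * (2 * (ρ - Γ)) ^ n) / n.factorial)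
      - ((2 * (ρ - Γ)) ^ n / n.factorial) *
        (((n ^ 2 + 3 * n - 2 : ℝ) * Γ ^ 2 + (4 - 2 * n) * ρ * Γ) / ((n + 1) * (n + 2))) := by
  cases n with
  | zero => exact i.elim0
  | succ m =>
    exact (setIntegral_budgetSet_sq i hΓ2 (by linarith)).trans
      (two_mul_integral_sq_mul_budgetVolume m hΓ2 (by linarith))

theorem budget_set_second_moment (n : ℕ) (hn : 1 ≤ n) (ρ Γ : ℝ) (hρ : 0 < ρ)
    (hΓ1 : ρ / 2 ≤ Γ) (hΓ2 : Γ ≤ ρ) (i : Fin n) :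
    ∫ x in {x : Fin n → ℝ | ∑ k, |x k| ≤ ρ ∧ ∀ k, |x k| ≤ Γ}, (x i) ^ 2 =
      (2 * ρ ^ 2 / ((n + 1) * (n + 2))) * (((2 * ρ) ^ n - n * (2 * (ρ - Γ)) ^ n) / n.factorial)
      - ((2 * (ρ - Γ)) ^ n / n.factorial) *
        (((n ^ 2 + 3 * n - 2 : ℝ) * Γ ^ 2 + (4 - 2 * n) * ρ * Γ) / ((n + 1) * (n + 2))) :=
  budget_set_second_moment_general n ρ Γ hΓ1 hΓ2 i
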